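/- arXiv:1011.0217 — 4 statements merged into one kernel-verified Lean document; each statement's English description precedes it below -/
import Mathlib

section
/- Let (T, x₀) be an initialized VAS. If there exists a run starting at x₀ satisfying PB_σ for some disjointness sequence σ = X₁⋯X_K with i ∈ X_K, then (T, x₀) is i-unbounded. -/
/-- A run in a VAS `T` of dimension `n` along path `π` from `x` to `y`:
all transitions are in `T`, every intermediate configuration stays in `ℕⁿ`
(is nonnegative), and `y = x + π.sum`. -/
def IsRun (n : ℕ) (T : Finset (Fin n → ℤ)) (x : Fin n → ℤ)
    (π : List (Fin n → ℤ)) (y : Fin n → ℤ) : Prop :=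
  (∀ t ∈ π, t ∈ T) ∧
  (∀ i ≤ π.length, ∀ j, 0 ≤ (x + (π.take i).sum) j) ∧
  y = x + π.sum

def iterPath {α : Type*} (π : List α) : ℕ → List α
  | 0 => []
  | (k+1) => π ++ iterPath π k

lemma run_mono {n T x π y} {x' : Fin n → ℤ} (h : IsRun n T x π y)
    (hx : ∀ j, x j ≤ x' j) : IsRun n T x' π (x' + π.sum) := by
  refine ⟨h.1, ?_, rfl⟩
  intro i hi j
  have h1 := h.2.1 i hi j
  have h2 := hx j
  simp only [Pi.add_apply] at *
  linarith

lemma run_append {n T x π y π' z} (h1 : IsRun n T x π y) (h2 : IsRun n T y π' z) :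
    IsRun n T x (π ++ π') z := by
  obtain ⟨hm1, hv1, he1⟩ := h1
  obtain ⟨hm2, hv2, he2⟩ := h2
  refine ⟨?_, ?_, ?_⟩
  · intro t ht; rcases List.mem_append.mp ht with h | h
    exacts [hm1 t h, hm2 t h]
  · intro i hi j
    rcases le_or_gt i π.length with h | h
    · have := hv1 i h j
      rwa [List.take_append_of_le_length h]
    · have hi' : i - π.length ≤ π'.length := by
        simp only [List.length_append] at hi; omega
      have hv := hv2 (i - π.length) hi' j
      have htake : (π ++ π').take i = π ++ π'.take (i - π.length) := by
        have : i = π.length + (i - π.length) := by omega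
        rw [List.take_append, List.take_of_length_le (by omega)]
      rw [htake, List.sum_append]
      have hy := congrFun he1 j
      simp only [Pi.add_apply] at hv hy ⊢
      linarith
  · rw [he2, he1, List.sum_append, add_assoc]

lemma run_iter {n T} {a : Fin n → ℤ} {π b} (h : IsRun n T a π b) :
    ∀ (N : ℕ) (w : Fin n → ℤ), (∀ j, 0 ≤ w j) →
    (∀ k : ℕ, k < N → ∀ j, a j ≤ w j + (k : ℤ) * π.sum j) →
    IsRun n T w (iterPath π N) (fun j => w j + (N : ℤ) * π.sum j) := by
  intro N
  induction N with
  | zero =>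
    intro w h0 _
    refine ⟨by simp [iterPath], ?_, ?_⟩
    · intro i hi j
      simp only [iterPath, List.length_nil, Nat.le_zero] at hi
      subst hi
      simpa using h0 j
    · funext j; simp [iterPath]
  | succ N ihN =>
    intro w h0 hk
    have haw : ∀ j, a j ≤ w j := by
      intro j; simpa using hk 0 (Nat.succ_pos N) j
    have h1 : IsRun n T w π (w + π.sum) := run_mono h haw
    have h0' : ∀ j, 0 ≤ (w + π.sum) j := by
      intro j
      have := h1.2.1 π.length le_rfl j
      simpa [List.take_length] using this
    have hk' : ∀ k : ℕ, k < N → ∀ j, a j ≤ (w + π.sum) j + (k : ℤ) * π.sum j := by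
      intro k hkN j
      have := hk (k + 1) (by omega) j
      simp only [Pi.add_apply]
      push_cast at this ⊢
      linarith
    have hrec := ihN (w + π.sum) h0' hk'
    have hall := run_append h1 hrec
    have heq : (fun j => (w + π.sum) j + (N : ℤ) * π.sum j)
        = fun j => w j + ((N + 1 : ℕ) : ℤ) * π.sum j := by
      funext j; simp only [Pi.add_apply]; push_cast; ring
    rw [heq] at hall
    exact hall

lemma neg_mul_bound (k N d C : ℤ) (hk0 : 0 ≤ k) (hkN : k ≤ N) (hdC : |d| ≤ C) :
    -(N * C) ≤ k * d := by
  have h1 : -C ≤ d := neg_le_of_abs_le hdC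
  have hC : 0 ≤ C := (abs_nonneg d).trans hdC
  nlinarith

/-- sufficiency direction of the witness run characterization:
if there is a run starting at `x₀` satisfying `PB_σ` for some disjointness
sequence `σ = X₁⋯X_K` with `i ∈ X_K` (here `a l`, `b l` are the configurations
`x_{2l-1}`, `x_{2l}`, reindexed from `0`, linked by the runs `σp`, `π`),
then `(T, x₀)` is `i`-unbounded: for every `B ≥ 0` there is a run from `x₀`
to some `y` with `y(i) ≥ B`. -/
theorem pb_witness_implies_unbounded (n K : ℕ) (hK : 1 ≤ K)
    (T : Finset (Fin n → ℤ)) (x₀ : Fin n → ℤ) (i : Fin n)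
    (X : ℕ → Finset (Fin n))
    (hne : ∀ l < K, (X l).Nonempty)
    (hdisj : ∀ l < K, ∀ l' < K, l ≠ l' → Disjoint (X l) (X l'))
    (a b : ℕ → Fin n → ℤ)
    (σp π : ℕ → List (Fin n → ℤ))
    (hrun0 : IsRun n T x₀ (σp 0) (a 0))
    (hruns : ∀ l < K, IsRun n T (a l) (π l) (b l))
    (hlink : ∀ l, l + 1 < K → IsRun n T (b l) (σp (l + 1)) (a (l + 1)))
    (hstrict : ∀ l < K, ∀ j ∈ X l, a l j < b l j)
    (hnonstrict : ∀ l < K, ∀ j ∉ X l, b l j < a l j → ∃ l' < l, j ∈ X l')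
    (hi : i ∈ X (K - 1)) :
    ∀ B : ℕ, ∃ (ρ : List (Fin n → ℤ)) (y : Fin n → ℤ),
      IsRun n T x₀ ρ y ∧ (B : ℤ) ≤ y i := by
  have key : ∀ m, 1 ≤ m → m ≤ K → ∀ B : ℤ, ∃ ρ y, IsRun n T x₀ ρ y ∧
      (∀ j, b (m - 1) j ≤ y j) ∧ (∀ j l, l < m → j ∈ X l → B ≤ y j) := by
    intro m hm
    induction m, hm using Nat.le_induction with
    | base =>
      intro _ B
      have hK0 : 0 < K := hK
      have hr0 := hruns 0 hK0
      have hbe : ∀ j, b 0 j = a 0 j + (π 0).sum j := by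
        intro j; rw [hr0.2.2]; simp
      have hδ0 : ∀ j, 0 ≤ (π 0).sum j := by
        intro j
        by_contra hcon
        push_neg at hcon
        have hblt : b 0 j < a 0 j := by have := hbe j; linarith
        by_cases hx : j ∈ X 0
        · have := hstrict 0 hK0 j hx; linarith
        · obtain ⟨l', hl', _⟩ := hnonstrict 0 hK0 j hx hblt; omega
      have ha0 : ∀ j, 0 ≤ a 0 j := by
        intro j; simpa using hr0.2.1 0 (Nat.zero_le _) j
      set N : ℕ := B.toNat + 1 with hN
      have hNcast : ((N : ℕ) : ℤ) = (B.toNat : ℤ) + 1 := by simp [hN]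
      have hNB : B ≤ (B.toNat : ℤ) := Int.self_le_toNat B
      have hiter := run_iter hr0 N (a 0) ha0 (by
        intro k hk j
        have h1 : (0:ℤ) ≤ (k : ℤ) * (π 0).sum j :=
          mul_nonneg (by positivity) (hδ0 j)
        linarith)
      refine ⟨σp 0 ++ iterPath (π 0) N, _, run_append hrun0 hiter, ?_, ?_⟩
      · intro j
        show b 0 j ≤ a 0 j + (N : ℤ) * (π 0).sum j
        have h1 : (0:ℤ) ≤ ((N : ℤ) - 1) * (π 0).sum j :=
          mul_nonneg (by rw [hNcast]; linarith [Int.natCast_nonneg B.toNat]) (hδ0 j)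
        have := hbe j
        linarith
      · intro j l hl hjX
        have hl0 : l = 0 := by omega
        subst hl0
        show B ≤ a 0 j + (N : ℤ) * (π 0).sum j
        have hδ1 : 1 ≤ (π 0).sum j := by
          have h1 := hstrict 0 hK0 j hjX; have h2 := hbe j; omega
        have h1 : (0:ℤ) ≤ (N : ℤ) * ((π 0).sum j - 1) :=
          mul_nonneg (Int.natCast_nonneg N) (by linarith)
        have := ha0 j
        rw [hNcast] at h1 ⊢
        nlinarith
    | succ m hm ih =>
      intro hm1K B
      have hmK : m < K := by omega
      have hrm := hruns m hmK
      have hbm : ∀ j, b m j = a m j + (π m).sum j := by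
        intro j; rw [hrm.2.2]; simp
      have ham : ∀ j, 0 ≤ a m j := by
        intro j; simpa using hrm.2.1 0 (Nat.zero_le _) j
      have hδneg : ∀ j, (π m).sum j < 0 → ∃ l' < m, j ∈ X l' := by
        intro j hj
        have hblt : b m j < a m j := by have := hbm j; linarith
        by_cases hx : j ∈ X m
        · have := hstrict m hmK j hx; linarith
        · exact hnonstrict m hmK j hx hblt
      set N : ℕ := B.toNat + 1 with hN
      have hNcast : ((N : ℕ) : ℤ) = (B.toNat : ℤ) + 1 := by simp [hN]
      have hNB : B ≤ (B.toNat : ℤ) := Int.self_le_toNat B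
      set C : ℤ := ∑ j : Fin n, |(π m).sum j| with hCdef
      have hCj : ∀ j, |(π m).sum j| ≤ C := by
        intro j
        exact Finset.single_le_sum (f := fun j => |(π m).sum j|)
          (fun j _ => abs_nonneg _) (Finset.mem_univ j)
      have hC0 : 0 ≤ C := le_trans (abs_nonneg _) (hCj ⟨0, by
        rcases Nat.eq_zero_or_pos n with h | h
        · exact absurd (Fin.pos i) (by omega)
        · exact h⟩)
      set M : ℤ := ∑ j : Fin n, (|a m j| + |b (m - 1) j| + |b m j|) with hMdef
      have hMj : ∀ j, |a m j| + |b (m - 1) j| + |b m j| ≤ M := by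
        intro j
        exact Finset.single_le_sum (f := fun j => |a m j| + |b (m - 1) j| + |b m j|)
          (fun j _ => by positivity) (Finset.mem_univ j)
      set B' : ℤ := max B 0 + (N : ℤ) * C + M with hB'def
      obtain ⟨ρ, y, hρ, hge, hbig⟩ := ih (by omega) B'
      have hlinkm := hlink (m - 1) (by omega)
      have hmm : m - 1 + 1 = m := Nat.succ_pred_eq_of_pos hm
      rw [hmm] at hlinkm
      have hsum : ∀ j, (σp m).sum j = a m j - b (m - 1) j := by
        intro j
        have := congrFun hlinkm.2.2 j
        simp only [Pi.add_apply] at this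
        linarith
      have hrunσ : IsRun n T y (σp m) (y + (σp m).sum) := run_mono hlinkm hge
      have hz : ∀ j, (y + (σp m).sum) j = y j + (a m j - b (m - 1) j) := by
        intro j; simp [hsum j]
      have h0z : ∀ j, 0 ≤ (y + (σp m).sum) j := by
        intro j; rw [hz j]
        have := hge j; have := ham j
        linarith
      have hkz : ∀ k : ℕ, k < N → ∀ j,
          a m j ≤ (y + (σp m).sum) j + (k : ℤ) * (π m).sum j := by
        intro k hk j
        rw [hz j]
        rcases le_or_gt 0 ((π m).sum j) with hs | hs
        · have h1 : (0:ℤ) ≤ (k : ℤ) * (π m).sum j := mul_nonneg (by positivity) hs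
          have := hge j
          linarith
        · obtain ⟨l', hl', hjl'⟩ := hδneg j hs
          have hy := hbig j l' hl' hjl'
          have hkb : -((N : ℤ) * C) ≤ (k : ℤ) * (π m).sum j :=
            neg_mul_bound _ _ _ _ (by positivity) (by exact_mod_cast hk.le) (hCj j)
          have hMb := hMj j
          have h1 := le_abs_self (b (m - 1) j)
          have h2 := abs_nonneg (a m j)
          have h3 := abs_nonneg (b m j)
          have h4 : (0:ℤ) ≤ max B 0 := le_max_right B 0
          linarith
      have hiter := run_iter hrm N (y + (σp m).sum) h0z hkz
      refine ⟨ρ ++ (σp m ++ iterPath (π m) N), _,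
        run_append hρ (run_append hrunσ hiter), ?_, ?_⟩
      · intro j
        have hsm : m + 1 - 1 = m := by omega
        rw [hsm]
        show b m j ≤ (y + (σp m).sum) j + (N : ℤ) * (π m).sum j
        rw [hz j]
        have hbmj := hbm j
        rcases le_or_gt 0 ((π m).sum j) with hs | hs
        · have h1 : (0:ℤ) ≤ ((N : ℤ) - 1) * (π m).sum j :=
            mul_nonneg (by rw [hNcast]; linarith [Int.natCast_nonneg B.toNat]) hs
          have := hge j
          linarith
        · obtain ⟨l', hl', hjl'⟩ := hδneg j hs
          have hy := hbig j l' hl' hjl'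
          have hkb : -((N : ℤ) * C) ≤ (N : ℤ) * (π m).sum j :=
            neg_mul_bound _ _ _ _ (by positivity) le_rfl (hCj j)
          have hMb := hMj j
          have h1 := le_abs_self (b m j)
          have h2 := neg_abs_le (a m j)
          have h3 := le_abs_self (b (m - 1) j)
          have h4 : (0:ℤ) ≤ max B 0 := le_max_right B 0
          linarith
      · intro j l hl hjX
        show B ≤ (y + (σp m).sum) j + (N : ℤ) * (π m).sum j
        rw [hz j]
        rcases Nat.lt_or_ge l m with hlm | hlm
        · have hy := hbig j l hlm hjX
          have hkb : -((N : ℤ) * C) ≤ (N : ℤ) * (π m).sum j :=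
            neg_mul_bound _ _ _ _ (by positivity) le_rfl (hCj j)
          have hMb := hMj j
          have h1 := neg_abs_le (a m j)
          have h2 := le_abs_self (b (m - 1) j)
          have h3 := abs_nonneg (b m j)
          have h4 : B ≤ max B 0 := le_max_left B 0
          linarith
        · have hlm' : l = m := by omega
          rw [hlm'] at hjX
          have hδ1 : 1 ≤ (π m).sum j := by
            have h1 := hstrict m hmK j hjX; have h2 := hbm j; omega
          have h1 : (0:ℤ) ≤ (N : ℤ) * ((π m).sum j - 1) :=
            mul_nonneg (Int.natCast_nonneg N) (by linarith)
          have h2 := hge j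
          have h3 := ham j
          rw [hNcast] at h1 ⊢
          nlinarith
  intro B
  obtain ⟨ρ, y, hρ, _, hbig⟩ := key K hK le_rfl (B : ℤ)
  exact ⟨ρ, y, hρ, hbig i (K - 1) (by omega) hi⟩
end

section
/- If ρ is a pseudo-run of length L in a VASS V weakly satisfying a generalized unboundedness property P of length K, then there exists a genuine run (all configurations in ℕⁿ) satisfying P whose length is at most ((L · pic(V))^K) · (1 + K² · L · pic(V)) + L, where pic(V) is the maximal absolute value of the negative entries of transition vectors of V. -/
/-- Membership of an integer `d` in an interval given by optional lower bound
`lo` (`none` = `-∞`) and optional upper bound `hi` (`none` = `+∞`). -/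
def MemI (lo hi : Option ℤ) (d : ℤ) : Prop :=
  (∀ u, lo = some u → u ≤ d) ∧ (∀ v, hi = some v → d ≤ v)

/-- Flattened path of the first `r` segments of a decomposed pseudo-run, where
segment `s` consists of the connector path `σ s` followed by the loop `π s`. -/
def pre {n : ℕ} (σ π : ℕ → List (Fin n → ℤ)) (r : ℕ) : List (Fin n → ℤ) :=
  ((List.range r).map fun s => σ s ++ π s).flatten

/-- The pseudo-configuration `x_{2r+1}` (just before loop `π r`). -/
def aConf {n : ℕ} (c₀ : Fin n → ℤ) (σ π : ℕ → List (Fin n → ℤ)) (r : ℕ) :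
    Fin n → ℤ :=
  c₀ + (pre σ π r ++ σ r).sum

/-- The pseudo-configuration `x_{2r+2}` (just after loop `π r`). -/
def bConf {n : ℕ} (c₀ : Fin n → ℤ) (σ π : ℕ → List (Fin n → ℤ)) (r : ℕ) :
    Fin n → ℤ :=
  c₀ + (pre σ π (r + 1)).sum

/-- The pseudo-configuration at offset `i` inside segment `r`. -/
def conf {n : ℕ} (c₀ : Fin n → ℤ) (σ π : ℕ → List (Fin n → ℤ)) (r i : ℕ) :
    Fin n → ℤ :=
  c₀ + (pre σ π r ++ (σ r ++ π r).take i).sum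

/-- The approximation property `A[P, l, INCR, I, +∞]` for a decomposed
pseudo-run with `M + 1` loop segments (segments reindexed from `0`), for the
generalized unboundedness property `P` given by interval bounds `lo`, `hi`:
(transitions in `T`); (P1') the effect of each loop `π r` lies in the
corresponding intervals; (P2') a negative effect on component `j` at stage `r`
implies `j ∈ INCR` or an earlier stage with positive effect on `j`;
(P3') with bound `+∞`: every pseudo-configuration strictly before the end of
segment `r` is nonnegative on every `j ∈ I` with `j ∉ INCR` and with no
earlier stage of positive effect on `j`. -/
def SatA {n : ℕ} (T : Finset (Fin n → ℤ)) (M : ℕ) (INCR I : Finset (Fin n))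
    (lo hi : ℕ → Fin n → Option ℤ) (c₀ : Fin n → ℤ)
    (σ π : ℕ → List (Fin n → ℤ)) : Prop :=
  (∀ r ≤ M, ∀ t ∈ σ r ++ π r, t ∈ T) ∧
  (∀ r ≤ M, ∀ j, MemI (lo r j) (hi r j) (bConf c₀ σ π r j - aConf c₀ σ π r j)) ∧
  (∀ r ≤ M, ∀ j, bConf c₀ σ π r j - aConf c₀ σ π r j < 0 →
      j ∈ INCR ∨ ∃ r' < r, 0 < bConf c₀ σ π r' j - aConf c₀ σ π r' j) ∧
  (∀ r ≤ M, ∀ i < (σ r ++ π r).length, ∀ j ∈ I, j ∉ INCR →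
      (∀ r' < r, ¬ 0 < bConf c₀ σ π r' j - aConf c₀ σ π r' j) →
      0 ≤ conf c₀ σ π r i j)

/-- Weak satisfaction of a generalized unboundedness property `P` (given by
interval bounds `lo`, `hi`) by a decomposed pseudo-run with `M + 1` loop
segments: (transitions in `T`); (P1) the effect of loop `π r` lies in the
corresponding intervals; (P2) a negative effect on `j` at stage `r` implies an
earlier stage with positive effect on `j`; (P3) every pseudo-configuration with
a negative `j`-th entry occurs after some stage with positive effect on `j`. -/
def WeakSat {n : ℕ} (T : Finset (Fin n → ℤ)) (M : ℕ)
    (lo hi : ℕ → Fin n → Option ℤ) (c₀ : Fin n → ℤ)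
    (σ π : ℕ → List (Fin n → ℤ)) : Prop :=
  (∀ r ≤ M, ∀ t ∈ σ r ++ π r, t ∈ T) ∧
  (∀ r ≤ M, ∀ j, MemI (lo r j) (hi r j) (bConf c₀ σ π r j - aConf c₀ σ π r j)) ∧
  (∀ r ≤ M, ∀ j, bConf c₀ σ π r j - aConf c₀ σ π r j < 0 →
      ∃ r' < r, 0 < bConf c₀ σ π r' j - aConf c₀ σ π r' j) ∧
  (∀ r ≤ M, ∀ i < (σ r ++ π r).length, ∀ j, conf c₀ σ π r i j < 0 →
      ∃ r' < r, 0 < bConf c₀ σ π r' j - aConf c₀ σ π r' j)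

/-- `pic(T)`: the maximal absolute value of the negative entries of the
transition vectors of `T`. -/
def picT {n : ℕ} (T : Finset (Fin n → ℤ)) : ℕ :=
  T.sup fun t => Finset.univ.sup fun j => (-(t j)).toNat

/-- A decomposed genuine run (all configurations in `ℕⁿ`) satisfying the
generalized unboundedness property given by `lo`, `hi`: transitions in `T`,
(P1), (P2), and every configuration along the run is nonnegative. -/
def RunSatP {n : ℕ} (T : Finset (Fin n → ℤ)) (M : ℕ)
    (lo hi : ℕ → Fin n → Option ℤ) (c₀ : Fin n → ℤ)
    (σ π : ℕ → List (Fin n → ℤ)) : Prop :=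
  (∀ r ≤ M, ∀ t ∈ σ r ++ π r, t ∈ T) ∧
  (∀ r ≤ M, ∀ j, MemI (lo r j) (hi r j) (bConf c₀ σ π r j - aConf c₀ σ π r j)) ∧
  (∀ r ≤ M, ∀ j, bConf c₀ σ π r j - aConf c₀ σ π r j < 0 →
      ∃ r' < r, 0 < bConf c₀ σ π r' j - aConf c₀ σ π r' j) ∧
  (∀ r ≤ M, ∀ i ≤ (σ r ++ π r).length, ∀ j, 0 ≤ conf c₀ σ π r i j)

/-!
Keep the loops and rebuild the connectors. Fix a component `j` and let `π f` be the first loop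
with positive effect on `j`. By weak satisfaction the pseudo-run is nonnegative on `j` up to the
end of `π f`, and the earlier loops have effect `0` on `j`. Right after every loop `π u` insert
`p * budget (u + 1)` further copies of it, where `p = pic(T)`: copies of loops of nonnegative
effect never hurt, and the copies of `π f` lift `j` by at least `p` times the length of the rest
of the run, which lowers `j` by at most `p` per step. The connectors after the last nonempty loop
are dropped, because weak satisfaction says nothing about the configuration they end in.
The new run has length at most `L * ∏ u < M, (1 + p * |π u|) ≤ L * (1 + M * (L * p) ^ M)`.
-/

def StaysNonneg (x : ℤ) (w : List ℤ) : Prop :=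
  ∀ m, 0 ≤ x + (w.take m).sum

namespace StaysNonneg

variable {x y : ℤ} {a b l w : List ℤ}

theorem nil_iff : StaysNonneg x [] ↔ 0 ≤ x := by
  simp [StaysNonneg]

theorem nonneg_add_sum (h : StaysNonneg x w) : 0 ≤ x + w.sum := by
  simpa using h w.length

theorem mono (hxy : x ≤ y) (h : StaysNonneg x w) : StaysNonneg y w :=
  fun m => (h m).trans (by linarith)

theorem append_iff : StaysNonneg x (a ++ b) ↔ StaysNonneg x a ∧ StaysNonneg (x + a.sum) b := by
  constructor
  · intro h
    refine ⟨fun m => ?_, fun m => ?_⟩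
    · rcases le_total m a.length with hm | hm
      · simpa [List.take_append, Nat.sub_eq_zero_of_le hm] using h m
      · simpa [List.take_of_length_le hm] using h a.length
    · simpa [List.take_append, add_assoc, List.take_of_length_le (Nat.le_add_right _ _)]
        using h (a.length + m)
  · rintro ⟨ha, hb⟩ m
    rw [List.take_append, List.sum_append]
    rcases le_total m a.length with hm | hm
    · simpa [Nat.sub_eq_zero_of_le hm] using ha m
    · rw [List.take_of_length_le hm, ← add_assoc]
      exact hb _

theorem replicate_flatten (h : StaysNonneg x l) (hl : 0 ≤ l.sum) (k : ℕ) :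
    StaysNonneg x (List.replicate k l).flatten := by
  induction k generalizing x with
  | zero => simpa [nil_iff] using h 0
  | succ k ih =>
    rw [List.replicate_succ, List.flatten_cons, append_iff]
    exact ⟨h, ih (h.mono (by linarith))⟩

theorem pump (h : StaysNonneg x (a ++ l ++ b)) (hl : 0 ≤ l.sum) (k : ℕ) :
    StaysNonneg x (a ++ l ++ (List.replicate k l).flatten ++ b) := by
  rw [append_iff, append_iff] at h
  obtain ⟨⟨ha, hl'⟩, hb⟩ := h
  have hrep := (hl'.mono (y := x + (a ++ l).sum) (by simp [List.sum_append, hl])).replicate_flatten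
    hl k
  refine append_iff.mpr ⟨append_iff.mpr ⟨append_iff.mpr ⟨ha, hl'⟩, hrep⟩, hb.mono ?_⟩
  simp only [List.sum_append, List.sum_flatten, List.map_replicate, List.sum_replicate]
  have hk : 0 ≤ k • l.sum := nsmul_nonneg hl k
  linarith

theorem of_neg_le (p : ℕ) (hw : ∀ y ∈ w, -(p : ℤ) ≤ y) (hx : p * w.length ≤ x) :
    StaysNonneg x w := by
  intro m
  have hsum := List.card_nsmul_le_sum (w.take m) _ fun y hy => hw y (List.mem_of_mem_take hy)
  have hlen : ((w.take m).length : ℤ) ≤ w.length := by simp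
  rw [nsmul_eq_mul] at hsum
  nlinarith

end StaysNonneg

section Runs

variable {n : ℕ} (σ π : ℕ → List (Fin n → ℤ))

@[simp] theorem pre_zero : pre σ π 0 = [] := by simp [pre]

theorem pre_succ (r : ℕ) : pre σ π (r + 1) = pre σ π r ++ (σ r ++ π r) := by
  simp [pre, List.range_succ]

theorem pre_isPrefix {a b : ℕ} (h : a ≤ b) : pre σ π a <+: pre σ π b := by
  induction b, h using Nat.le_induction with
  | base => exact List.prefix_refl _
  | succ b _ ih => exact ih.trans (pre_succ σ π b ▸ List.prefix_append _ _)

theorem length_pre (r : ℕ) : (pre σ π r).length = ∑ s ∈ Finset.range r, (σ s ++ π s).length := by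
  induction r with
  | zero => simp
  | succ r ih => rw [pre_succ, List.length_append, ih, Finset.sum_range_succ]

theorem sum_length_le_length_pre (r : ℕ) :
    ∑ s ∈ Finset.range r, (π s).length ≤ (pre σ π r).length := by
  rw [length_pre]
  exact Finset.sum_le_sum fun s _ => by simp

theorem pre_congr {σ₁ σ₂ : ℕ → List (Fin n → ℤ)} {r : ℕ} (h : ∀ s < r, σ₁ s = σ₂ s) :
    pre σ₁ π r = pre σ₂ π r := by
  unfold pre
  congr 1
  exact List.map_congr_left fun s hs => by rw [h s (List.mem_range.mp hs)]

theorem pre_add_of_nil {a d : ℕ} (h : ∀ s, a ≤ s → s < a + d → σ s = [] ∧ π s = []) :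
    pre σ π (a + d) = pre σ π a := by
  induction d with
  | zero => rfl
  | succ d ih =>
    obtain ⟨hσ, hπ⟩ := h (a + d) (by omega) (by omega)
    rw [← add_assoc, pre_succ, hσ, hπ, ih fun s h₁ h₂ => h s h₁ (by omega)]
    simp

theorem take_pre {r R i : ℕ} (hr : r < R) (hi : i ≤ (σ r ++ π r).length) :
    (pre σ π R).take ((pre σ π r).length + i) = pre σ π r ++ (σ r ++ π r).take i := by
  obtain ⟨tail, htail⟩ := pre_isPrefix σ π (Nat.succ_le_of_lt hr)
  rw [← htail, pre_succ, List.append_assoc, List.take_append,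
    List.take_of_length_le (Nat.le_add_right _ _), Nat.add_sub_cancel_left,
    List.take_append_of_le_length hi]

theorem exists_mem_of_mem_pre {r : ℕ} {t : Fin n → ℤ} (ht : t ∈ pre σ π r) :
    ∃ s < r, t ∈ σ s ++ π s := by
  simp only [pre, List.mem_flatten, List.mem_map, List.mem_range] at ht
  obtain ⟨_, ⟨s, hs, rfl⟩, ht⟩ := ht
  exact ⟨s, hs, ht⟩

theorem exists_eq_length_pre_add {R m : ℕ} (hm : m < (pre σ π R).length) :
    ∃ r < R, ∃ i < (σ r ++ π r).length, m = (pre σ π r).length + i := by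
  induction R with
  | zero => simp at hm
  | succ R ih =>
    rw [pre_succ, List.length_append] at hm
    rcases Nat.lt_or_ge m (pre σ π R).length with h | h
    · obtain ⟨r, hr, hrest⟩ := ih h
      exact ⟨r, by omega, hrest⟩
    · exact ⟨R, by omega, m - (pre σ π R).length, by omega, by omega⟩

theorem sum_take_map_apply (w : List (Fin n → ℤ)) (j : Fin n) (m : ℕ) :
    ((w.map (· j)).take m).sum = (w.take m).sum j := by
  rw [Pi.list_sum_apply, List.map_take]

theorem bConf_sub_aConf (c₀ : Fin n → ℤ) (r : ℕ) (j : Fin n) :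
    bConf c₀ σ π r j - aConf c₀ σ π r j = (π r).sum j := by
  simp [bConf, aConf, pre_succ, List.sum_append]

theorem aConf_eq_conf (c₀ : Fin n → ℤ) (r : ℕ) :
    aConf c₀ σ π r = conf c₀ σ π r (σ r).length := by
  rw [aConf, conf, List.take_left]

def truncConn (q : ℕ) (s : ℕ) : List (Fin n → ℤ) :=
  if s < q then σ s else []

theorem pre_truncConn {q R : ℕ} (hq : q ≤ R) (hπ : ∀ s, q ≤ s → s < R → π s = []) :
    pre (truncConn σ q) π R = pre σ π q := by
  obtain ⟨d, rfl⟩ := Nat.exists_eq_add_of_le hq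
  rw [pre_add_of_nil (truncConn σ q) π fun s h₁ h₂ => ⟨if_neg (by omega), hπ s h₁ h₂⟩]
  exact pre_congr π fun s hs => if_pos hs

end Runs

section Pumping

variable {n : ℕ} (σ π : ℕ → List (Fin n → ℤ)) (N : ℕ → ℕ)

def pumpBlock : ℕ → List (Fin n → ℤ)
  | 0 => []
  | u + 1 => (List.replicate (N u) (π u)).flatten

def pumped (s : ℕ) : List (Fin n → ℤ) :=
  pumpBlock π N s ++ σ s

theorem length_pumpBlock_succ (u : ℕ) :
    (pumpBlock π N (u + 1)).length = N u * (π u).length := by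
  simp [pumpBlock, List.length_flatten, List.map_replicate, List.sum_replicate]

theorem exists_eq_succ_of_mem_pumpBlock {s : ℕ} {t : Fin n → ℤ} (ht : t ∈ pumpBlock π N s) :
    ∃ u, s = u + 1 ∧ t ∈ π u := by
  cases s with
  | zero => simp [pumpBlock] at ht
  | succ u =>
    simp only [pumpBlock, List.mem_flatten, List.mem_replicate] at ht
    obtain ⟨_, ⟨-, rfl⟩, ht⟩ := ht
    exact ⟨u, rfl, ht⟩

theorem staysNonneg_pre_pumped {j : Fin n} {x : ℤ} {r : ℕ}
    (hδ : ∀ u, u + 1 < r → 0 ≤ (π u).sum j) (tail : List (Fin n → ℤ))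
    (h : StaysNonneg x ((pre σ π r ++ tail).map (· j))) :
    StaysNonneg x ((pre (pumped σ π N) π r ++ tail).map (· j)) := by
  induction r generalizing tail with
  | zero => simpa using h
  | succ r ih =>
    have h' := ih (fun u hu => hδ u (by omega)) (σ r ++ π r ++ tail)
      (by simpa [pre_succ] using h)
    cases r with
    | zero => simpa [pre_succ, pumped, pumpBlock] using h'
    | succ u =>
      have hl : 0 ≤ ((π u).map (· j)).sum := by
        rw [← Pi.list_sum_apply]; exact hδ u (by omega)
      have := StaysNonneg.pump (a := (pre (pumped σ π N) π u ++ pumped σ π N u).map (· j))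
        (b := (σ (u + 1) ++ π (u + 1) ++ tail).map (· j)) (by simpa [pre_succ] using h') hl (N u)
      simpa [pre_succ, pumped, pumpBlock, List.map_flatten, List.map_replicate] using this

theorem sum_length_pumpBlock_Ico_le {M a q : ℕ} (haq : a ≤ q) (hq : q ≤ M + 1) :
    ∑ s ∈ Finset.Ico a q, (pumpBlock π N s).length ≤
      (pumpBlock π N a).length + ∑ u ∈ Finset.Ico a M, N u * (π u).length := by
  rcases haq.eq_or_lt with rfl | haq
  · simp
  rw [Finset.sum_eq_sum_Ico_succ_bot haq, ← Nat.sub_add_cancel (Nat.one_le_of_lt haq),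
    ← Finset.sum_Ico_add']
  simp only [length_pumpBlock_succ]
  gcongr
  omega

theorem length_pre_pumped_le {M a q : ℕ} (haq : a ≤ q) (hq : q ≤ M + 1) :
    (pre (pumped σ π N) π q).length ≤
      (pre (pumped σ π N) π a).length + (pumpBlock π N a).length +
        ((pre σ π (M + 1)).length + ∑ u ∈ Finset.Ico a M, N u * (π u).length) := by
  have hlen : ∀ r, (pre (pumped σ π N) π r).length =
      ∑ s ∈ Finset.range r, (pumpBlock π N s).length +
        ∑ s ∈ Finset.range r, (σ s ++ π s).length := by
    intro r
    simp only [length_pre, pumped, List.length_append, ← Finset.sum_add_distrib, add_assoc]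
  have hseg : ∑ s ∈ Finset.Ico a q, (σ s ++ π s).length ≤ (pre σ π (M + 1)).length := by
    rw [length_pre, Finset.range_eq_Ico]
    exact Finset.sum_le_sum_of_subset (Finset.Ico_subset_Ico (Nat.zero_le a) hq)
  rw [hlen, hlen, ← Finset.sum_range_add_sum_Ico _ haq,
    ← Finset.sum_range_add_sum_Ico (fun s => (σ s ++ π s).length) haq]
  have := sum_length_pumpBlock_Ico_le π N haq hq
  omega

theorem staysNonneg_pre_pumped_append_pumpBlock {j : Fin n} {x : ℤ} {f : ℕ}
    (hδ : ∀ u ≤ f, 0 ≤ (π u).sum j) (h : StaysNonneg x ((pre σ π (f + 1)).map (· j))) :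
    StaysNonneg x ((pre (pumped σ π N) π (f + 1) ++ pumpBlock π N (f + 1)).map (· j)) := by
  have hP := staysNonneg_pre_pumped σ π N (r := f + 1) (fun u hu => hδ u (by omega)) []
    (by simpa using h)
  have hl : 0 ≤ ((π f).map (· j)).sum := by rw [← Pi.list_sum_apply]; exact hδ f le_rfl
  have := StaysNonneg.pump (a := (pre (pumped σ π N) π f ++ pumped σ π N f).map (· j))
    (b := []) (by simpa [pre_succ] using hP) hl (N f)
  simpa [pre_succ, pumpBlock, List.map_flatten, List.map_replicate] using this

theorem pre_pumped_append_pumpBlock_isPrefix {f q : ℕ} (hq : f + 1 < q) :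
    pre (pumped σ π N) π (f + 1) ++ pumpBlock π N (f + 1) <+: pre (pumped σ π N) π q :=
  .trans (by simp [pre_succ (pumped σ π N) π (f + 1), pumped])
    (pre_isPrefix (pumped σ π N) π (Nat.succ_le_of_lt hq))

end Pumping

theorem neg_picT_le {n : ℕ} {T : Finset (Fin n → ℤ)} {t : Fin n → ℤ} (ht : t ∈ T) (j : Fin n) :
    -(picT T : ℤ) ≤ t j := by
  have h : (-(t j)).toNat ≤ picT T :=
    (Finset.le_sup (f := fun j => (-(t j)).toNat) (Finset.mem_univ j)).trans
      (Finset.le_sup (f := fun t => Finset.univ.sup fun j => (-(t j)).toNat) ht)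
  have := Int.self_le_toNat (-(t j))
  omega

section Horizon

variable {n : ℕ} (π : ℕ → List (Fin n → ℤ)) (M : ℕ)

open Classical in
noncomputable def loopHorizon : ℕ :=
  Nat.find (⟨M + 1, fun _ _ h => absurd h (by omega)⟩ : ∃ q, ∀ u, q ≤ u → u ≤ M → π u = [])

theorem loopHorizon_le : loopHorizon π M ≤ M + 1 :=
  Nat.find_min' _ fun _ _ h => absurd h (by omega)

theorem eq_nil_of_loopHorizon_le {u : ℕ} (h₁ : loopHorizon π M ≤ u) (h₂ : u ≤ M) : π u = [] :=
  Nat.find_spec (⟨M + 1, fun _ _ h => absurd h (by omega)⟩ :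
    ∃ q, ∀ u, q ≤ u → u ≤ M → π u = []) u h₁ h₂

theorem lt_loopHorizon {u : ℕ} (hu : u ≤ M) (hπ : π u ≠ []) : u < loopHorizon π M := by
  by_contra h
  exact hπ (eq_nil_of_loopHorizon_le π M (by omega) hu)

theorem ne_nil_of_loopHorizon_eq_succ {r : ℕ} (h : loopHorizon π M = r + 1) : π r ≠ [] := by
  intro hr
  refine Nat.find_min (⟨M + 1, fun _ _ h => absurd h (by omega)⟩ :
    ∃ q, ∀ u, q ≤ u → u ≤ M → π u = []) (m := r) (by unfold loopHorizon at h; omega) ?_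
  intro u h₁ h₂
  rcases h₁.eq_or_lt with rfl | h₁
  · exact hr
  · exact eq_nil_of_loopHorizon_le π M (by omega) h₂

end Horizon

theorem prod_one_add_le (a : ℕ → ℕ) (m : ℕ) :
    ∏ u ∈ Finset.range m, (1 + a u) ≤ 1 + m * (∑ u ∈ Finset.range m, a u) ^ m := by
  induction m with
  | zero => simp
  | succ m ih =>
    set A' := ∑ u ∈ Finset.range m, a u
    set A := ∑ u ∈ Finset.range (m + 1), a u
    have hA : A = A' + a m := Finset.sum_range_succ a m
    have ha : a m ≤ A ^ (m + 1) := by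
      rcases Nat.eq_zero_or_pos A with h0 | hpos
      · omega
      · exact (show a m ≤ A by omega).trans (Nat.le_self_pow (by omega) A)
    have hm : m * A' ^ m * (1 + a m) ≤ m * A ^ (m + 1) := by
      rcases Nat.eq_zero_or_pos A' with h0 | hpos
      · cases m <;> simp [h0]
      · rw [pow_succ, mul_assoc]
        gcongr <;> omega
    calc ∏ u ∈ Finset.range (m + 1), (1 + a u)
        ≤ (1 + m * A' ^ m) * (1 + a m) := by
          rw [Finset.prod_range_succ]; exact Nat.mul_le_mul_right _ ih
      _ = 1 + a m + m * A' ^ m * (1 + a m) := by ring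
      _ ≤ 1 + (m + 1) * A ^ (m + 1) := by nlinarith

section Budget

variable (ℓ : ℕ → ℕ) (p L M : ℕ)

/-- Bounds the length of the pumped run from segment `r` on when the loop of segment `u` is
pumped `p * budget (u + 1)` times. -/
def budget (r : ℕ) : ℕ :=
  L * ∏ u ∈ Finset.Ico r M, (1 + p * ℓ u)

theorem budget_eq {r : ℕ} (hr : r ≤ M) :
    budget ℓ p L M r = L + ∑ u ∈ Finset.Ico r M, p * budget ℓ p L M (u + 1) * ℓ u := by
  induction hr using Nat.decreasingInduction with
  | self => simp [budget]
  | of_succ r hr ih =>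
    rw [Finset.sum_eq_sum_Ico_succ_bot hr, budget, Finset.prod_eq_prod_Ico_succ_bot hr,
      add_left_comm, ← ih, budget]
    ring

theorem budget_zero_le (hℓ : ∑ u ∈ Finset.range M, ℓ u ≤ L) :
    budget ℓ p L M 0 ≤ (L * p) ^ (M + 1) * (1 + (M + 1) ^ 2 * L * p) + L := by
  have hprod : budget ℓ p L M 0 ≤ L + M * L * (L * p) ^ M := by
    have hsum : ∑ u ∈ Finset.range M, p * ℓ u ≤ L * p := by
      rw [← Finset.mul_sum, mul_comm]; gcongr
    calc budget ℓ p L M 0 ≤ L * (1 + M * (∑ u ∈ Finset.range M, p * ℓ u) ^ M) := by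
          rw [budget, ← Finset.range_eq_Ico]; gcongr; exact prod_one_add_le _ M
      _ ≤ L * (1 + M * (L * p) ^ M) := by gcongr
      _ = L + M * L * (L * p) ^ M := by ring
  have hrest : M * L * (L * p) ^ M ≤ (L * p) ^ (M + 1) * (1 + (M + 1) ^ 2 * L * p) := by
    rcases Nat.eq_zero_or_pos (L * p) with h0 | hpos
    · cases M <;> simp [h0]
    · have hL : L ≤ L * p := Nat.le_mul_of_pos_right L (Nat.pos_of_mul_pos_left hpos)
      calc M * L * (L * p) ^ M ≤ M * (L * p) * (L * p) ^ M := by gcongr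
        _ = (L * p) ^ (M + 1) * M := by ring
        _ ≤ (L * p) ^ (M + 1) * (1 + (M + 1) ^ 2 * L * p) := by
          gcongr; nlinarith
  omega

end Budget

theorem length_pre_pumped_le_budget {n M a q : ℕ} (σ π : ℕ → List (Fin n → ℤ)) (p : ℕ)
    (haq : a ≤ q) (hq : q ≤ M + 1) (ha : a ≤ M) :
    let B := budget (fun u => (π u).length) p (pre σ π (M + 1)).length M
    let N := fun u => p * B (u + 1)
    (pre (pumped σ π N) π q).length ≤
      (pre (pumped σ π N) π a).length + (pumpBlock π N a).length + B a := by
  intro B N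
  rw [show B a = _ from budget_eq _ _ _ _ ha]
  exact length_pre_pumped_le σ π N haq hq

namespace WeakSat

variable {n M : ℕ} {T : Finset (Fin n → ℤ)} {lo hi : ℕ → Fin n → Option ℤ}
  {c₀ : Fin n → ℤ} {σ π : ℕ → List (Fin n → ℤ)} {j : Fin n} {r : ℕ} {N : ℕ → ℕ}

theorem sum_nonneg (h : WeakSat T M lo hi c₀ σ π) (hr : r ≤ M)
    (hfresh : ∀ u < r, ¬ 0 < (π u).sum j) : 0 ≤ (π r).sum j := by
  by_contra hneg
  obtain ⟨u, hu, hpos⟩ := h.2.2.1 r hr j (by rw [bConf_sub_aConf]; omega)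
  exact hfresh u hu (by rwa [bConf_sub_aConf] at hpos)

theorem conf_nonneg (h : WeakSat T M lo hi c₀ σ π) (hr : r ≤ M) {i : ℕ}
    (hi : i < (σ r ++ π r).length) (hfresh : ∀ u < r, ¬ 0 < (π u).sum j) :
    0 ≤ conf c₀ σ π r i j := by
  by_contra hneg
  obtain ⟨u, hu, hpos⟩ := h.2.2.2 r hr i hi j (by omega)
  exact hfresh u hu (by rwa [bConf_sub_aConf] at hpos)

theorem staysNonneg_pre_succ (h : WeakSat T M lo hi c₀ σ π) (hr : r ≤ M) (hπ : π r ≠ [])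
    (hfresh : ∀ u < r, ¬ 0 < (π u).sum j) :
    StaysNonneg (c₀ j) ((pre σ π (r + 1)).map (· j)) := by
  intro m
  rw [sum_take_map_apply]
  rcases Nat.lt_or_ge m (pre σ π (r + 1)).length with hm | hm
  · obtain ⟨s, hs, i, hi, rfl⟩ := exists_eq_length_pre_add σ π hm
    rw [take_pre σ π hs hi.le]
    simpa [conf] using h.conf_nonneg (by omega) hi fun u hu => hfresh u (by omega)
  · rw [List.take_of_length_le hm]
    have ha := h.conf_nonneg hr (i := (σ r).length)
      (by simp [List.length_pos_iff.mpr hπ]) hfresh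
    rw [← aConf_eq_conf] at ha
    have hb := bConf_sub_aConf σ π c₀ r j
    have hδ := h.sum_nonneg hr hfresh
    simp only [bConf, Pi.add_apply] at hb
    linarith

theorem runSatP_of (h : WeakSat T M lo hi c₀ σ π) {σ' : ℕ → List (Fin n → ℤ)}
    (hT : ∀ r ≤ M, ∀ t ∈ σ' r, t ∈ T)
    (hnonneg : ∀ j, StaysNonneg (c₀ j) ((pre σ' π (M + 1)).map (· j))) :
    RunSatP T M lo hi c₀ σ' π := by
  obtain ⟨hT₀, hP1, hP2, -⟩ := h
  refine ⟨fun r hr t ht => ?_, ?_, ?_, fun r hr i hi j => ?_⟩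
  · rcases List.mem_append.mp ht with ht | ht
    · exact hT r hr t ht
    · exact hT₀ r hr t (List.mem_append_right _ ht)
  · simpa only [bConf_sub_aConf] using hP1
  · simpa only [bConf_sub_aConf] using hP2
  · have := hnonneg j ((pre σ' π r).length + i)
    rw [sum_take_map_apply, take_pre σ' π (by omega : r < M + 1) hi] at this
    simpa [conf] using this

theorem mem_of_mem_pumped (h : WeakSat T M lo hi c₀ σ π) {r : ℕ} (hr : r ≤ M)
    {t : Fin n → ℤ} (ht : t ∈ pumped σ π N r ++ π r) : t ∈ T := by
  rcases List.mem_append.mp ht with ht | ht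
  · rcases List.mem_append.mp ht with ht | ht
    · obtain ⟨u, rfl, htu⟩ := exists_eq_succ_of_mem_pumpBlock π N ht
      exact h.1 u (by omega) t (List.mem_append_right _ htu)
    · exact h.1 r hr t (List.mem_append_left _ ht)
  · exact h.1 r hr t (List.mem_append_right _ ht)

theorem mem_of_mem_truncConn_pumped (h : WeakSat T M lo hi c₀ σ π) {q r : ℕ} (hr : r ≤ M)
    {t : Fin n → ℤ} (ht : t ∈ truncConn (pumped σ π N) q r) : t ∈ T := by
  unfold truncConn at ht
  split_ifs at ht
  · exact h.mem_of_mem_pumped hr (List.mem_append_left _ ht)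
  · simp at ht

theorem mem_of_mem_pre_pumped (h : WeakSat T M lo hi c₀ σ π) {q : ℕ} (hq : q ≤ M + 1)
    {t : Fin n → ℤ} (ht : t ∈ pre (pumped σ π N) π q) : t ∈ T :=
  let ⟨_, hs, ht⟩ := exists_mem_of_mem_pre _ π ht
  h.mem_of_mem_pumped (by omega) ht

theorem staysNonneg_pumped_of_forall_not_pos (h : WeakSat T M lo hi c₀ σ π)
    (hc₀ : 0 ≤ c₀ j) (hj : ∀ u ≤ M, ¬ 0 < (π u).sum j) :
    StaysNonneg (c₀ j) ((pre (pumped σ π N) π (loopHorizon π M)).map (· j)) := by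
  have hq := loopHorizon_le π M
  cases hr : loopHorizon π M with
  | zero => simpa [StaysNonneg.nil_iff] using hc₀
  | succ r =>
    have hold := h.staysNonneg_pre_succ (by omega) (ne_nil_of_loopHorizon_eq_succ π M hr)
      fun u hu => hj u (by omega)
    have hδ : ∀ u, u + 1 < r + 1 → 0 ≤ (π u).sum j :=
      fun u hu => h.sum_nonneg (by omega) fun v hv => hj v (by omega)
    simpa using staysNonneg_pre_pumped σ π N hδ [] (by simpa using hold)

theorem staysNonneg_pumped_of_first_pos (h : WeakSat T M lo hi c₀ σ π) {f : ℕ} (hf : f ≤ M)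
    (hpos : 0 < (π f).sum j) (hfirst : ∀ u < f, ¬ 0 < (π u).sum j) {B : ℕ}
    (hlen : f + 1 < loopHorizon π M → (pre (pumped σ π N) π (loopHorizon π M)).length ≤
      (pre (pumped σ π N) π (f + 1)).length + (pumpBlock π N (f + 1)).length + B)
    (hN : picT T * B ≤ N f) :
    StaysNonneg (c₀ j) ((pre (pumped σ π N) π (loopHorizon π M)).map (· j)) := by
  have hπf : π f ≠ [] := fun hnil => by simp [hnil] at hpos
  have hδ : ∀ u ≤ f, 0 ≤ (π u).sum j :=
    fun u hu => h.sum_nonneg (by omega) fun v hv => hfirst v (by omega)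
  have hold := h.staysNonneg_pre_succ hf hπf hfirst
  rcases (Nat.succ_le_of_lt (lt_loopHorizon π M hf hπf)).eq_or_lt with hq | hq
  · rw [← hq]
    simpa using staysNonneg_pre_pumped σ π N (r := f + 1) (fun u hu => hδ u (by omega)) []
      (by simpa using hold)
  obtain ⟨rest, hsplit⟩ := pre_pumped_append_pumpBlock_isPrefix σ π N hq
  have hpump := staysNonneg_pre_pumped_append_pumpBlock σ π N hδ hold
  rw [← hsplit, List.map_append, StaysNonneg.append_iff]
  refine ⟨hpump, StaysNonneg.of_neg_le (picT T) ?_ ?_⟩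
  · simp only [List.mem_map]
    rintro _ ⟨t, ht, rfl⟩
    exact neg_picT_le (h.mem_of_mem_pre_pumped (loopHorizon_le π M)
      (hsplit ▸ List.mem_append_right _ ht)) j
  · have hrest : rest.length ≤ B := by
      have := hlen hq
      rw [← hsplit] at this
      simp only [List.length_append] at this
      omega
    have hsum : ((pre (pumped σ π N) π (f + 1) ++ pumpBlock π N (f + 1)).map (· j)).sum =
        ((pre (pumped σ π N) π (f + 1)).map (· j)).sum + N f * (π f).sum j := by
      simp [pumpBlock, List.sum_flatten, List.map_replicate, ← Pi.list_sum_apply]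
    have h0 := (StaysNonneg.append_iff.mp (List.map_append ▸ hpump)).1.nonneg_add_sum
    have h1 : (picT T : ℤ) * rest.length ≤ N f := by
      exact_mod_cast (Nat.mul_le_mul_left _ hrest).trans hN
    have h2 : (N f : ℤ) ≤ N f * (π f).sum j := le_mul_of_one_le_right (by positivity) hpos
    rw [List.length_map, hsum]
    linarith

theorem staysNonneg_pumped (h : WeakSat T M lo hi c₀ σ π) (hc₀ : 0 ≤ c₀ j) (B : ℕ → ℕ)
    (hlen : ∀ f, f + 1 < loopHorizon π M → (pre (pumped σ π N) π (loopHorizon π M)).length ≤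
      (pre (pumped σ π N) π (f + 1)).length + (pumpBlock π N (f + 1)).length + B f)
    (hN : ∀ f, picT T * B f ≤ N f) :
    StaysNonneg (c₀ j) ((pre (pumped σ π N) π (loopHorizon π M)).map (· j)) := by
  classical
  by_cases hj : ∃ f, f ≤ M ∧ 0 < (π f).sum j
  · obtain ⟨hf, hpos⟩ := Nat.find_spec hj
    exact h.staysNonneg_pumped_of_first_pos hf hpos
      (fun u hu hu' => Nat.find_min hj hu ⟨by omega, hu'⟩) (hlen _) (hN _)
  · push Not at hj
    exact h.staysNonneg_pumped_of_forall_not_pos hc₀ fun u hu => (hj u hu).not_gt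

end WeakSat

/-- If `ρ` is a pseudo-run of length `L` weakly satisfying a
generalized unboundedness property `P` of length `K = M + 1` (given by interval
bounds `lo`, `hi`), starting from a genuine initial configuration `c₀ ∈ ℕⁿ`,
then there exists a genuine run from `c₀` (all configurations in `ℕⁿ`)
satisfying `P`, whose length is at most
`((L · pic(T))^K) · (1 + K² · L · pic(T)) + L`. -/
theorem pseudo_run_to_run (n M : ℕ) (T : Finset (Fin n → ℤ))
    (lo hi : ℕ → Fin n → Option ℤ) (c₀ : Fin n → ℤ)
    (σ π : ℕ → List (Fin n → ℤ))
    (hc₀ : ∀ j, 0 ≤ c₀ j)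
    (h : WeakSat T M lo hi c₀ σ π) :
    ∃ σ' π' : ℕ → List (Fin n → ℤ),
      RunSatP T M lo hi c₀ σ' π' ∧
      (pre σ' π' (M + 1)).length ≤
        ((pre σ π (M + 1)).length * picT T) ^ (M + 1) *
          (1 + (M + 1) ^ 2 * (pre σ π (M + 1)).length * picT T) +
        (pre σ π (M + 1)).length := by
  set B := budget (fun u => (π u).length) (picT T) (pre σ π (M + 1)).length M
  set N : ℕ → ℕ := fun u => picT T * B (u + 1)
  have hq := loopHorizon_le π M
  have hrun : pre (truncConn (pumped σ π N) (loopHorizon π M)) π (M + 1) =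
      pre (pumped σ π N) π (loopHorizon π M) :=
    pre_truncConn _ π hq fun s h₁ h₂ => eq_nil_of_loopHorizon_le π M h₁ (by omega)
  refine ⟨truncConn (pumped σ π N) (loopHorizon π M), π,
    h.runSatP_of (fun r hr t => h.mem_of_mem_truncConn_pumped hr) fun j => ?_, ?_⟩
  · rw [hrun]
    exact h.staysNonneg_pumped (hc₀ j) (fun f => B (f + 1))
      (fun f hf => length_pre_pumped_le_budget σ π _ hf.le hq (by omega)) fun f => le_rfl
  · rw [hrun]
    refine ((length_pre_pumped_le_budget σ π _ (Nat.zero_le _) hq (Nat.zero_le M)).trans_eq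
      (by simp [pumpBlock])).trans (budget_zero_le (fun u => (π u).length) _ _ _ ?_)
    exact (Finset.sum_le_sum_of_subset (Finset.range_subset_range.mpr M.le_succ)).trans
      (sum_length_le_length_pre σ π (M + 1))
end

section
/- For the 2-counter VASS with states A, B, transitions A →(1,0) A, A →(0,0) B, B →(−1,1) B, initialized at (A, (0,0)): the second component is unbounded, but there is no run (A,(0,0)) →* (q, x₁) →π (q, x₂) with x₁ ≺ x₂ (componentwise ≤ and ≠) and x₁(2) < x₂(2) for q ∈ {A, B}. -/
def Step15 (c c' : Fin 2 × (Fin 2 → ℕ)) : Prop :=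
  (c.1 = 0 ∧ c'.1 = 0 ∧ c'.2 0 = c.2 0 + 1 ∧ c'.2 1 = c.2 1) ∨
  (c.1 = 0 ∧ c'.1 = 1 ∧ c'.2 = c.2) ∨
  (c.1 = 1 ∧ c'.1 = 1 ∧ c'.2 0 + 1 = c.2 0 ∧ c'.2 1 = c.2 1 + 1)

lemma reachA (n : ℕ) :
    Relation.ReflTransGen Step15 ((0 : Fin 2), fun _ => 0) (0, ![n, 0]) := by
  induction n with
  | zero =>
    have : (fun _ => 0 : Fin 2 → ℕ) = ![0, 0] := by
      funext i; fin_cases i <;> simp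
    rw [this]
  | succ n ih =>
    exact ih.tail (Or.inl ⟨rfl, rfl, by simp, by simp⟩)

lemma loopB (a b k : ℕ) :
    Relation.ReflTransGen Step15 (1, ![a + k, b]) (1, ![a, b + k]) := by
  induction k generalizing b with
  | zero => simp only [Nat.add_zero]; exact Relation.ReflTransGen.refl
  | succ k ih =>
    have h1 : Step15 (1, ![a + (k+1), b]) (1, ![a + k, b + 1]) :=
      Or.inr (Or.inr ⟨rfl, rfl, by simp; ring, by simp⟩)
    have := (Relation.ReflTransGen.single h1).trans (ih (b+1))
    have e : b + 1 + k = b + (k + 1) := by ring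
    rwa [e] at this

lemma stateB_run {c c' : Fin 2 × (Fin 2 → ℕ)} (h : Relation.TransGen Step15 c c')
    (hc : c.1 = 1) : c'.1 = 1 ∧ c'.2 0 < c.2 0 := by
  induction h with
  | single h =>
    rcases h with ⟨h1,_⟩|⟨h1,_⟩|⟨_,h2,h3,_⟩
    · rw [hc] at h1; exact absurd h1 (by decide)
    · rw [hc] at h1; exact absurd h1 (by decide)
    · exact ⟨h2, by omega⟩
  | tail _ h ih =>
    rcases h with ⟨h1,_⟩|⟨h1,_⟩|⟨_,h2,h3,_⟩
    · rw [ih.1] at h1; exact absurd h1 (by decide)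
    · rw [ih.1] at h1; exact absurd h1 (by decide)
    · exact ⟨h2, by have := ih.2; omega⟩

lemma stateA_run {c c' : Fin 2 × (Fin 2 → ℕ)} (h : Relation.TransGen Step15 c c')
    (hc : c'.1 = 0) : c'.2 1 = c.2 1 := by
  induction h with
  | single h =>
    rcases h with ⟨_,_,_,h4⟩|⟨_,h2,_⟩|⟨_,h2,_⟩
    · exact h4
    · rw [hc] at h2; exact absurd h2 (by decide)
    · rw [hc] at h2; exact absurd h2 (by decide)
  | tail hab h ih =>
    rcases h with ⟨h1,_,_,h4⟩|⟨_,h2,_⟩|⟨_,h2,_⟩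
    · rw [h4, ih h1]
    · rw [hc] at h2; exact absurd h2 (by decide)
    · rw [hc] at h2; exact absurd h2 (by decide)

/-- For this VASS initialized at `(A, (0,0))`: the second
component is unbounded, but there is no run
`(A,(0,0)) →* (q, x₁) →π (q, x₂)` with nonempty `π`, `x₁ ≺ x₂`
(componentwise `≤` and `≠`) and `x₁(2) < x₂(2)`. -/
theorem vass_unbounded_but_no_increasing_loop :
    (∀ B : ℕ, ∃ c : Fin 2 × (Fin 2 → ℕ),
      Relation.ReflTransGen Step15 ((0 : Fin 2), fun _ => 0) c ∧ B ≤ c.2 1) ∧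
    ¬ ∃ c₁ c₂ : Fin 2 × (Fin 2 → ℕ),
        Relation.ReflTransGen Step15 ((0 : Fin 2), fun _ => 0) c₁ ∧
        Relation.TransGen Step15 c₁ c₂ ∧
        c₁.1 = c₂.1 ∧ (∀ j, c₁.2 j ≤ c₂.2 j) ∧ c₁.2 ≠ c₂.2 ∧
        c₁.2 1 < c₂.2 1 := by
  constructor
  · intro B
    refine ⟨(1, ![0, B]), ?_, by simp⟩
    have h1 := reachA B
    have h2 : Step15 (0, ![B, 0]) (1, ![B, 0]) := Or.inr (Or.inl ⟨rfl, rfl, rfl⟩)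
    have h3 := loopB 0 0 B
    simp only [Nat.zero_add] at h3
    exact (h1.tail h2).trans h3
  · rintro ⟨c₁, c₂, _, hrun, hq, hle, _, hlt⟩
    have : c₁.1 = 0 ∨ c₁.1 = 1 := by omega
    rcases this with h | h
    · have := stateA_run hrun (hq ▸ h)
      omega
    · have := (stateB_run hrun h).2
      exact absurd (hle 0) (by omega)
end

section
/- If a run of an initialized VASS reaches, for every bound B, some configuration whose components in X are all ≥ B (simultaneous X-unboundedness), and the coverability-style witness run characterization holds, then X ⊆ X₁ ∪ ⋯ ∪ X_K for the witnessing disjointness sequence; conversely, if there is a run from the initial configuration satisfying PB_σ for σ = X₁⋯X_K with X ⊆ X₁ ∪ ⋯ ∪ X_K and X ∩ X_K ≠ ∅, then the initialized VASS is simultaneously X-unbounded. -/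
/-- The step relation of a VASS with control states `Q`, dimension `n` and
transition set `δ ⊆ Q × ℤⁿ × Q`: a transition matching the control states is
applied and both counter vectors stay in `ℕⁿ`. -/
def StepV {Q : Type*} {n : ℕ} (δ : Set (Q × (Fin n → ℤ) × Q))
    (c c' : Q × (Fin n → ℤ)) : Prop :=
  ∃ t ∈ δ, t.1 = c.1 ∧ t.2.2 = c'.1 ∧ c'.2 = c.2 + t.2.1 ∧
    (∀ j, 0 ≤ c.2 j) ∧ (∀ j, 0 ≤ c'.2 j)

lemma stepV_mono {Q : Type*} {n : ℕ} {δ : Set (Q × (Fin n → ℤ) × Q)}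
    (v : Fin n → ℤ) (hv : ∀ j, 0 ≤ v j) {c c' : Q × (Fin n → ℤ)}
    (h : StepV δ c c') : StepV δ (c.1, c.2 + v) (c'.1, c'.2 + v) := by
  obtain ⟨t, ht, h1, h2, h3, h4, h5⟩ := h
  refine ⟨t, ht, h1, h2, ?_, ?_, ?_⟩
  · rw [h3]; funext j; simp [Pi.add_apply]; ring
  · intro j; exact add_nonneg (h4 j) (hv j)
  · intro j; exact add_nonneg (h5 j) (hv j)

lemma run_mono_s18 {Q : Type*} {n : ℕ} {δ : Set (Q × (Fin n → ℤ) × Q)}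
    (v : Fin n → ℤ) (hv : ∀ j, 0 ≤ v j) {c c' : Q × (Fin n → ℤ)}
    (h : Relation.ReflTransGen (StepV δ) c c') :
    Relation.ReflTransGen (StepV δ) (c.1, c.2 + v) (c'.1, c'.2 + v) := by
  induction h with
  | refl => exact Relation.ReflTransGen.refl
  | tail _ h2 ih => exact ih.tail (stepV_mono v hv h2)

lemma run_end_nonneg {Q : Type*} {n : ℕ} {δ : Set (Q × (Fin n → ℤ) × Q)}
    {c c' : Q × (Fin n → ℤ)} (h : Relation.ReflTransGen (StepV δ) c c')
    (hc : ∀ j, 0 ≤ c.2 j) : ∀ j, 0 ≤ c'.2 j := by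
  induction h with
  | refl => exact hc
  | tail _ h2 _ => obtain ⟨t, _, _, _, _, _, h5⟩ := h2; exact h5

lemma run_iterate {Q : Type*} {n : ℕ} {δ : Set (Q × (Fin n → ℤ) × Q)}
    {c d : Q × (Fin n → ℤ)} (hcd : c.1 = d.1)
    (h : Relation.ReflTransGen (StepV δ) c d)
    (s : Fin n → ℤ) (m : ℕ)
    (hs : ∀ i < m, ∀ j, 0 ≤ s j + (i : ℤ) * (d.2 j - c.2 j)) :
    Relation.ReflTransGen (StepV δ) (c.1, fun j => c.2 j + s j)
      (c.1, fun j => c.2 j + s j + (m : ℤ) * (d.2 j - c.2 j)) := by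
  induction m with
  | zero =>
      simp only [Nat.cast_zero, zero_mul, add_zero]
      exact Relation.ReflTransGen.refl
  | succ m ih =>
      have h1 := ih (fun i hi => hs i (Nat.lt_succ_of_lt hi))
      have hv : ∀ j, 0 ≤ s j + (m : ℤ) * (d.2 j - c.2 j) :=
        hs m (Nat.lt_succ_self m)
      have h2 := run_mono_s18 (δ := δ) (fun j => s j + (m : ℤ) * (d.2 j - c.2 j)) hv h
      have e1 : (c.1, c.2 + fun j => s j + (m : ℤ) * (d.2 j - c.2 j))
          = ((c.1 : Q), fun j => c.2 j + s j + (m : ℤ) * (d.2 j - c.2 j)) := by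
        refine Prod.ext rfl ?_
        funext j; simp [Pi.add_apply]; ring
      have e2 : (d.1, d.2 + fun j => s j + (m : ℤ) * (d.2 j - c.2 j))
          = ((c.1 : Q), fun j => c.2 j + s j + ((m + 1 : ℕ) : ℤ) * (d.2 j - c.2 j)) := by
        refine Prod.ext hcd.symm ?_
        funext j; simp [Pi.add_apply]; push_cast; ring
      rw [e1, e2] at h2
      exact h1.trans h2

/-- sufficiency direction: if there is a run from the initial
configuration `(q₀, x₀)` satisfying `PB_σ` for a disjointness sequence
`σ = X₁⋯X_K` with `X ⊆ X₁ ∪ ⋯ ∪ X_K` and `X ∩ X_K ≠ ∅` (here `a l`, `b l` are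
the configurations `(q_{2l−1}, x_{2l−1})`, `(q_{2l}, x_{2l})`, reindexed from
`0`, with (P0) equal control states, (STRICT) and (NONSTRICT)), then the
initialized VASS is simultaneously `X`-unbounded: for every `B ≥ 0` there is a
run from `(q₀, x₀)` to some `(q, y)` with `y(i) ≥ B` for all `i ∈ X`. -/
theorem pb_witness_implies_sim_unbounded (Q : Type*) (n K : ℕ) (hK : 1 ≤ K)
    (δ : Set (Q × (Fin n → ℤ) × Q)) (q₀ : Q) (x₀ : Fin n → ℤ)
    (hx₀ : ∀ j, 0 ≤ x₀ j)
    (X : Finset (Fin n)) (Xs : ℕ → Finset (Fin n))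
    (hne : ∀ l < K, (Xs l).Nonempty)
    (hdisj : ∀ l < K, ∀ l' < K, l ≠ l' → Disjoint (Xs l) (Xs l'))
    (hsub : ∀ j ∈ X, ∃ l < K, j ∈ Xs l)
    (hmeet : ∃ j ∈ X, j ∈ Xs (K - 1))
    (a b : ℕ → Q × (Fin n → ℤ))
    (h0 : Relation.ReflTransGen (StepV δ) (q₀, x₀) (a 0))
    (hP0 : ∀ l < K, (a l).1 = (b l).1)
    (hloops : ∀ l < K, Relation.ReflTransGen (StepV δ) (a l) (b l))
    (hlink : ∀ l, l + 1 < K → Relation.ReflTransGen (StepV δ) (b l) (a (l + 1)))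
    (hstrict : ∀ l < K, ∀ j ∈ Xs l, (a l).2 j < (b l).2 j)
    (hnonstrict : ∀ l < K, ∀ j ∉ Xs l,
      (b l).2 j < (a l).2 j → ∃ l' < l, j ∈ Xs l') :
    ∀ B : ℕ, ∃ (q : Q) (y : Fin n → ℤ),
      Relation.ReflTransGen (StepV δ) (q₀, x₀) (q, y) ∧
      ∀ i ∈ X, (B : ℤ) ≤ y i := by
  intro B
  -- effect of loop l
  set e : ℕ → Fin n → ℤ := fun l j => (b l).2 j - (a l).2 j with he
  -- uniform bound on the decrease of any loop
  set C : ℕ := (Finset.range K).sup fun l =>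
      Finset.univ.sup fun j => ((a l).2 j - (b l).2 j).toNat with hCdef
  have hC : ∀ l < K, ∀ j, -(C : ℤ) ≤ e l j := by
    intro l hl j
    have h1 : ((a l).2 j - (b l).2 j).toNat ≤ C :=
      le_trans
        (Finset.le_sup (f := fun j => ((a l).2 j - (b l).2 j).toNat) (Finset.mem_univ j))
        (Finset.le_sup (f := fun l => Finset.univ.sup fun j => ((a l).2 j - (b l).2 j).toNat)
          (Finset.mem_range.mpr hl))
    have h2 : (a l).2 j - (b l).2 j ≤ (((a l).2 j - (b l).2 j).toNat : ℤ) :=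
      Int.self_le_toNat _
    have := le_trans h2 (by exact_mod_cast h1 : (((a l).2 j - (b l).2 j).toNat : ℤ) ≤ (C : ℤ))
    simp only [he]
    linarith
  -- slack required at stage l, and number of pumpings of loop l
  set R : ℕ → ℕ := fun l => B * (C + 1) ^ (K - l) with hRdef
  set N : ℕ → ℕ := fun l => R (l + 1) with hNdef
  have hRsucc : ∀ l < K, (R l : ℤ) = (C + 1) * R (l + 1) := by
    intro l hl
    have : K - l = (K - (l + 1)) + 1 := by omega
    simp only [hRdef, this, pow_succ]
    push_cast
    ring
  have hRK : R K = B := by simp [hRdef]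
  -- accumulated slack
  set s : ℕ → Fin n → ℤ :=
    fun l j => ∑ l' ∈ Finset.range l, (N l' : ℤ) * e l' j with hsdef
  have hssucc : ∀ l j, s (l + 1) j = s l j + (N l : ℤ) * e l j := by
    intro l j; simp [hsdef, Finset.sum_range_succ]
  -- key case analysis: either a coordinate grows, or it lies in an earlier class
  have hkey : ∀ l < K, ∀ j, e l j < 0 → ∃ l' < l, j ∈ Xs l' := by
    intro l hl j hj
    have hba : (b l).2 j < (a l).2 j := by simp only [he] at hj; linarith
    refine hnonstrict l hl j ?_ hba
    intro hmem
    exact absurd (hstrict l hl j hmem) (by linarith)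
  -- the invariant
  have inv : ∀ l ≤ K, (∀ j, 0 ≤ s l j) ∧
      (∀ l' < l, ∀ j ∈ Xs l', (R l : ℤ) ≤ s l j) := by
    intro l
    induction l with
    | zero =>
        intro _
        constructor
        · intro j; simp [hsdef]
        · intro l' hl'; omega
    | succ l ih =>
        intro hlK
        have hl : l < K := by omega
        obtain ⟨ih1, ih2⟩ := ih (le_of_lt hlK)
        have hNR : (R l : ℤ) - (N l : ℤ) * C = (N l : ℤ) := by
          have := hRsucc l hl
          simp only [hNdef]
          push_cast at this ⊢
          linarith
        have hlow : ∀ j, e l j < 0 → (R (l + 1) : ℤ) ≤ s (l + 1) j := by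
          intro j hj
          obtain ⟨l', hl', hmem⟩ := hkey l hl j hj
          have h1 : (R l : ℤ) ≤ s l j := ih2 l' hl' j hmem
          have h2 : -(C : ℤ) ≤ e l j := hC l hl j
          have h3 : (N l : ℤ) * e l j ≥ (N l : ℤ) * (-(C : ℤ)) := by
            apply mul_le_mul_of_nonneg_left h2 (by positivity)
          rw [hssucc]
          have : (R (l + 1) : ℤ) = (N l : ℤ) := by simp [hNdef]
          rw [this]
          nlinarith
        constructor
        · intro j
          rcases lt_or_ge (e l j) 0 with hj | hj
          · have := hlow j hj
            have : (0 : ℤ) ≤ (R (l + 1) : ℤ) := by positivity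
            linarith [hlow j hj]
          · rw [hssucc]
            have : (0 : ℤ) ≤ (N l : ℤ) * e l j := by positivity
            linarith [ih1 j]
        · intro l' hl' j hmem
          rcases Nat.lt_succ_iff_lt_or_eq.mp hl' with hl'' | heq
          · rcases lt_or_ge (e l j) 0 with hj | hj
            · exact hlow j hj
            · rw [hssucc]
              have h1 : (R l : ℤ) ≤ s l j := ih2 l' hl'' j hmem
              have h2 : (0 : ℤ) ≤ (N l : ℤ) * e l j := by positivity
              have h3 : (R (l + 1) : ℤ) ≤ (R l : ℤ) := by
                have := hRsucc l hl
                nlinarith [Nat.cast_nonneg (α := ℤ) (R (l + 1)), Nat.cast_nonneg (α := ℤ) C]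
              linarith
          · -- l' = l : the pumped class itself
            rw [heq] at hmem
            have hab : (a l).2 j < (b l).2 j := hstrict l hl j hmem
            have hge1 : (1 : ℤ) ≤ e l j := by simp only [he]; omega
            rw [hssucc]
            have : (R (l + 1) : ℤ) = (N l : ℤ) := by simp [hNdef]
            rw [this]
            nlinarith [ih1 j, Nat.cast_nonneg (α := ℤ) (N l)]
  -- pumping one loop
  have pump : ∀ l < K,
      Relation.ReflTransGen (StepV δ) (q₀, x₀) ((a l).1, fun j => (a l).2 j + s l j) →
      Relation.ReflTransGen (StepV δ) (q₀, x₀)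
        ((b l).1, fun j => (b l).2 j + s (l + 1) j) := by
    intro l hl hrun
    obtain ⟨inv1, _⟩ := inv l (le_of_lt hl)
    have hNR : (R l : ℤ) - (N l : ℤ) * C = (N l : ℤ) := by
      have := hRsucc l hl
      simp only [hNdef]
      push_cast at this ⊢
      linarith
    have hpre : ∀ i < N l + 1, ∀ j, 0 ≤ s l j + (i : ℤ) * ((b l).2 j - (a l).2 j) := by
      intro i hi j
      rcases lt_or_ge (e l j) 0 with hj | hj
      · obtain ⟨l', hl', hmem⟩ := hkey l hl j hj
        have h1 : (R l : ℤ) ≤ s l j := (inv l (le_of_lt hl)).2 l' hl' j hmem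
        have h2 : -(C : ℤ) ≤ e l j := hC l hl j
        have hiN : (i : ℤ) ≤ (N l : ℤ) := by exact_mod_cast Nat.lt_succ_iff.mp hi
        have h3 : (i : ℤ) * e l j ≥ (N l : ℤ) * (-(C : ℤ)) := by
          have hi0 : (0 : ℤ) ≤ (i : ℤ) := by positivity
          nlinarith
        have hN0 : (0 : ℤ) ≤ (N l : ℤ) := by positivity
        simp only [he] at h3
        nlinarith
      · have : (0 : ℤ) ≤ (i : ℤ) * ((b l).2 j - (a l).2 j) := by
          have : (0 : ℤ) ≤ (b l).2 j - (a l).2 j := by simpa [he] using hj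
          positivity
        linarith [inv1 j]
    have hiter := run_iterate (hP0 l hl) (hloops l hl) (s l) (N l + 1) hpre
    have heq : ((a l).1, fun j => (a l).2 j + s l j +
        ((N l + 1 : ℕ) : ℤ) * ((b l).2 j - (a l).2 j))
        = ((b l).1, fun j => (b l).2 j + s (l + 1) j) := by
      refine Prod.ext (hP0 l hl) ?_
      funext j
      show (a l).2 j + s l j + ((N l + 1 : ℕ) : ℤ) * ((b l).2 j - (a l).2 j)
          = (b l).2 j + s (l + 1) j
      rw [hssucc]
      simp only [he]
      push_cast
      ring
    rw [heq] at hiter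
    exact hrun.trans hiter
  -- the pumped run reaching `a l` with slack `s l`
  have runa : ∀ l, l < K →
      Relation.ReflTransGen (StepV δ) (q₀, x₀) ((a l).1, fun j => (a l).2 j + s l j) := by
    intro l
    induction l with
    | zero =>
        intro _
        have : ((a 0).1, fun j => (a 0).2 j + s 0 j) = a 0 := by
          refine Prod.ext rfl ?_
          funext j; simp [hsdef]
        rw [this]; exact h0
    | succ l ih =>
        intro hl1
        have hl : l < K := by omega
        have hrun := pump l hl (ih hl)
        obtain ⟨inv1, _⟩ := inv (l + 1) (le_of_lt hl1)
        have hlinkshift := run_mono_s18 (δ := δ) (s (l + 1)) inv1 (hlink l hl1)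
        have e1 : ((b l).1, (b l).2 + s (l + 1))
            = ((b l).1, fun j => (b l).2 j + s (l + 1) j) := rfl
        have e2 : ((a (l + 1)).1, (a (l + 1)).2 + s (l + 1))
            = ((a (l + 1)).1, fun j => (a (l + 1)).2 j + s (l + 1) j) := rfl
        rw [e1, e2] at hlinkshift
        exact hrun.trans hlinkshift
  -- final configuration
  have hK1 : K - 1 < K := by omega
  have hfinal := pump (K - 1) hK1 (runa (K - 1) hK1)
  have hKeq : K - 1 + 1 = K := by omega
  rw [hKeq] at hfinal
  -- the unpumped run, to get nonnegativity of b (K-1)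
  have plain : ∀ l < K, Relation.ReflTransGen (StepV δ) (q₀, x₀) (b l) := by
    intro l
    induction l with
    | zero => intro _; exact h0.trans (hloops 0 (by omega))
    | succ l ih =>
        intro hl1
        exact ((ih (by omega)).trans (hlink l hl1)).trans (hloops (l + 1) hl1)
  have hbnonneg : ∀ j, 0 ≤ (b (K - 1)).2 j :=
    run_end_nonneg (plain (K - 1) hK1) hx₀
  refine ⟨(b (K - 1)).1, _, hfinal, ?_⟩
  intro i hi
  obtain ⟨l, hl, hmem⟩ := hsub i hi
  have hsKi : (R K : ℤ) ≤ s K i := (inv K le_rfl).2 l hl i hmem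
  rw [hRK] at hsKi
  have := hbnonneg i
  show (B : ℤ) ≤ (b (K - 1)).2 i + s K i
  linarith
end
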